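/- arXiv:2207.14564 — 3 statements merged into one kernel-verified Lean document; each statement's English description precedes it below -/
import Mathlib

section
/- For every real r > 0, ∑_{n=1}^{∞} (−1)^{n−1}/(n² + r²) = (1/(2r²))·(1 − πr/sinh(πr)). -/
/-!
On `[-π, π]` the function `x ↦ cosh (r x)` takes equal values at the endpoints, so it extends to a
continuous function on the circle `ℝ / 2πℤ`. Its Fourier coefficients are
`(-1)ⁿ r sinh (π r) / (π (n² + r²))`, which are absolutely summable, so the Fourier series converges
to the function everywhere; evaluating at `0` gives `∑_{n ∈ ℤ} (-1)ⁿ / (n² + r²) = π / (r sinh (π r))`.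
The summand is even in `n`, and folding the sum over `ℤ` onto `n ≥ 1` gives the formula.
-/

open Real

namespace Complex

theorem integral_exp_mul_symm {c : ℂ} (hc : c ≠ 0) (a : ℝ) :
    ∫ x in -a..a, exp (c * x) = 2 * sinh (c * a) / c := by
  rw [integral_exp_mul_complex hc, sinh, ofReal_neg, mul_neg]
  ring

theorem integral_exp_neg_int_mul_I_mul_cosh {r : ℝ} (hr : r ≠ 0) (n : ℤ) :
    ∫ x in -π..π, exp (-(n * x * I)) * cosh (r * x)
      = ((-1) ^ n * (2 * r * Real.sinh (π * r) / (n ^ 2 + r ^ 2)) : ℝ) := by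
  set c : ℂ := r - n * I with hc_def
  set d : ℂ := r + n * I with hd_def
  have hc : c ≠ 0 := fun h => hr (by simpa [c] using congrArg re h)
  have hd : d ≠ 0 := fun h => hr (by simpa [d] using congrArg re h)
  have hcd : c * d = n ^ 2 + r ^ 2 := by
    rw [hc_def, hd_def]; ring_nf; rw [I_sq]; ring
  have hsplit (x : ℝ) : exp (-(n * x * I)) * cosh (r * x) = (exp (c * x) + exp (-d * x)) / 2 := by
    rw [cosh, mul_div_assoc', mul_add, ← exp_add, ← exp_add, hc_def, hd_def]
    ring_nf
  have hsinh_c : sinh (c * π) = (-1) ^ n * sinh (π * r) := by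
    rw [← Int.cast_negOnePow, ← sinh_antiperiodic.sub_int_mul_eq, hc_def]; ring_nf
  have hsinh_d : sinh (d * π) = (-1) ^ n * sinh (π * r) := by
    rw [← Int.cast_negOnePow, ← sinh_antiperiodic.add_int_mul_eq, hd_def]; ring_nf
  simp_rw [hsplit]
  rw [intervalIntegral.integral_div, intervalIntegral.integral_add
      ((by fun_prop : Continuous _).intervalIntegrable _ _)
      ((by fun_prop : Continuous _).intervalIntegrable _ _),
    integral_exp_mul_symm hc, integral_exp_mul_symm (neg_ne_zero.mpr hd),
    neg_mul, sinh_neg, mul_neg, neg_div_neg_eq, hsinh_c, hsinh_d]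
  push_cast
  rw [← hcd]
  field_simp
  rw [hc_def, hd_def]
  ring

end Complex

theorem summable_neg_one_zpow_div_sq_add_sq (r : ℝ) :
    Summable fun n : ℤ => (-1 : ℝ) ^ n / ((n : ℝ) ^ 2 + r ^ 2) := by
  refine (summable_one_div_int_pow.mpr one_lt_two).of_norm_bounded_eventually ?_
  filter_upwards [(Set.finite_singleton (0 : ℤ)).compl_mem_cofinite] with n hn
  have hn : (0 : ℝ) < (n : ℝ) ^ 2 := by
    have : (n : ℝ) ≠ 0 := by exact_mod_cast hn
    positivity
  rw [norm_div, norm_zpow, norm_neg, norm_one, one_zpow, Real.norm_of_nonneg (by positivity)]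
  gcongr
  exact le_add_of_nonneg_right (sq_nonneg r)

theorem HasSum.nat_add_one_of_neg_eq {E : Type*} [NormedAddCommGroup E] [NormedSpace ℝ E]
    [CompleteSpace E] {f : ℤ → E} {s : E} (hf : ∀ n, f (-n) = f n) (h : HasSum f s) :
    HasSum (fun n : ℕ => f (n + 1)) ((2 : ℝ)⁻¹ • (s - f 0)) := by
  have hpos : HasSum (fun n : ℕ => f (n + 1)) (∑' n : ℕ, f (n + 1)) :=
    (h.summable.comp_injective ((add_left_injective 1).comp Nat.cast_injective)).hasSum
  have hneg : HasSum (fun n : ℕ => f (-(n + 1))) (∑' n : ℕ, f (n + 1)) := by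
    simpa only [hf] using hpos
  rw [h.unique (hpos.of_add_one_of_neg_add_one hneg)]
  convert hpos using 1
  module

instance fact_zero_lt_two_pi : Fact (0 < 2 * π) := ⟨two_pi_pos⟩

noncomputable def coshCircle (r : ℝ) : C(AddCircle (2 * π), ℂ) where
  toFun := AddCircle.liftIco (2 * π) (-π) fun x => Complex.cosh (r * x)
  continuous_toFun := AddCircle.liftIco_continuous
    (by simp [show -π + 2 * π = π by ring, mul_neg]) (by fun_prop)

theorem coe_coshCircle (r : ℝ) :
    ⇑(coshCircle r) = AddCircle.liftIco (2 * π) (-π) fun x => Complex.cosh (r * x) :=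
  rfl

theorem coshCircle_zero (r : ℝ) : coshCircle r 0 = 1 := by
  rw [coe_coshCircle, ← QuotientAddGroup.mk_zero,
    AddCircle.liftIco_coe_apply ⟨by linarith [pi_pos], by linarith [pi_pos]⟩]
  simp

theorem fourierCoeff_coshCircle {r : ℝ} (hr : r ≠ 0) (n : ℤ) :
    fourierCoeff (coshCircle r) n
      = (r * Real.sinh (π * r) / π * ((-1) ^ n / ((n : ℝ) ^ 2 + r ^ 2)) : ℝ) := by
  have hfourier (x : ℝ) :
      fourier (-n) (x : AddCircle (π - -π)) = Complex.exp (-(n * x * Complex.I)) := by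
    rw [fourier_coe_apply]
    congr 1
    field_simp
    push_cast
    ring
  rw [coe_coshCircle, fourierCoeff_liftIco_eq, fourierCoeffOn_eq_integral,
    show -π + 2 * π = π by ring]
  simp_rw [hfourier, smul_eq_mul, Complex.integral_exp_neg_int_mul_I_mul_cosh hr]
  rw [Complex.real_smul, ← Complex.ofReal_mul]
  congr 1
  field_simp
  ring

theorem hasSum_int_neg_one_zpow_div_sq_add_sq {r : ℝ} (hr : r ≠ 0) :
    HasSum (fun n : ℤ => (-1 : ℝ) ^ n / ((n : ℝ) ^ 2 + r ^ 2)) (π / (r * Real.sinh (π * r))) := by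
  have hsinh : Real.sinh (π * r) ≠ 0 := Real.sinh_ne_zero.mpr (mul_ne_zero pi_ne_zero hr)
  have hsummable : Summable (fourierCoeff (coshCircle r)) :=
    (Complex.summable_ofReal.mpr ((summable_neg_one_zpow_div_sq_add_sq r).mul_left _)).congr
      fun n => (fourierCoeff_coshCircle hr n).symm
  have hfourier := has_pointwise_sum_fourier_series_of_summable hsummable 0
  simp_rw [fourier_eval_zero, smul_eq_mul, mul_one, fourierCoeff_coshCircle hr,
    coshCircle_zero] at hfourier
  have hcancel (x : ℝ) : π / (r * Real.sinh (π * r)) * (r * Real.sinh (π * r) / π * x) = x := by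
    field_simp
  simpa only [hcancel, mul_one] using
    (Complex.hasSum_ofReal.mp hfourier).mul_left (π / (r * Real.sinh (π * r)))

theorem stmt_2 (r : ℝ) (hr : 0 < r) :
    ∑' n : ℕ, (-1 : ℝ) ^ n / (((n : ℝ) + 1) ^ 2 + r ^ 2)
      = 1 / (2 * r ^ 2) * (1 - Real.pi * r / Real.sinh (Real.pi * r)) := by
  have heven (n : ℤ) :
      (-1 : ℝ) ^ (-n) / (((-n : ℤ) : ℝ) ^ 2 + r ^ 2) = (-1) ^ n / ((n : ℝ) ^ 2 + r ^ 2) := by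
    simp [zpow_neg, ← inv_zpow]
  have hsum := (hasSum_int_neg_one_zpow_div_sq_add_sq hr.ne').nat_add_one_of_neg_eq heven
  have hterm (n : ℕ) : (-1 : ℝ) ^ n / (((n : ℝ) + 1) ^ 2 + r ^ 2)
      = -((-1 : ℝ) ^ ((n : ℤ) + 1) / ((((n : ℤ) + 1 : ℤ) : ℝ) ^ 2 + r ^ 2)) := by
    rw [zpow_add_one₀ (by norm_num), zpow_natCast]
    push_cast
    ring
  have hsinh : Real.sinh (π * r) ≠ 0 := Real.sinh_ne_zero.mpr (by positivity)
  rw [tsum_congr hterm, tsum_neg, hsum.tsum_eq]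
  simp only [smul_eq_mul, zpow_zero, Int.cast_zero]
  field_simp
  ring
end

section
/- Let a < b, n ≥ 1, and define wce(n)² = 2·∑_{p=1}^{∞} 1/(1 + (2npπ/(b−a))²). Then wce(n)² = ( (b−a)/(2n) )/tanh( (b−a)/(2n) ) − 1, and wce(n) ~ (b−a)/(2√3 n) as n → ∞ (i.e. n·wce(n) → (b−a)/(2√3)). -/
/-!
Evaluating Mittag-Leffler's expansion `π cot (π z) - 1/z = ∑ 2z / (z² - k²)` at `z = i x / π`
gives `x coth x - 1 = ∑_{k ≥ 1} 2x² / (x² + π²k²)`, the closed form at `x = (b - a) / (2n)`.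
Divided by `x²`, the series `∑ 2 / (x² + π²k²)` converges uniformly in `x`, so it is continuous,
and at `x = 0` it equals `2ζ(2)/π² = 1/3`. Hence
`n² wce(n)² = ((b - a)/2)² (x coth x - 1)/x² → (b - a)²/12`.
-/

open Real Filter
open scoped Topology

lemma mul_I_div_pi_mem_integerComplement {x : ℝ} (hx : x ≠ 0) :
    (x : ℂ) * Complex.I / π ∈ Complex.integerComplement := by
  rintro ⟨m, hm⟩
  have him : (0 : ℝ) = x / π := by simpa [Complex.div_ofReal_im] using congrArg Complex.im hm
  exact div_ne_zero hx pi_ne_zero him.symm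

lemma hasSum_two_mul_sq_div_sq_add_sq_eq_div_tanh_sub_one {x : ℝ} (hx : x ≠ 0) :
    HasSum (fun k : ℕ => 2 * x ^ 2 / (x ^ 2 + (π * (k + 1)) ^ 2)) (x / tanh x - 1) := by
  have hz := mul_I_div_pi_mem_integerComplement hx
  have hπ : (π : ℂ) ≠ 0 := Complex.ofReal_ne_zero.mpr pi_ne_zero
  have hx' : (x : ℂ) ≠ 0 := Complex.ofReal_ne_zero.mpr hx
  have hterm (k : ℕ) : x * Complex.I / π * cotTerm (x * Complex.I / π) k
      = ((2 * x ^ 2 / (x ^ 2 + (π * (k + 1)) ^ 2) : ℝ) : ℂ) := by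
    have hden : (x : ℂ) ^ 2 + (π * (k + 1)) ^ 2 ≠ 0 := by
      exact_mod_cast (by positivity : x ^ 2 + (π * (k + 1)) ^ 2 ≠ 0)
    have hprod : (x * Complex.I / π + (k + 1)) * (x * Complex.I / π - (k + 1))
        = -((x : ℂ) ^ 2 + (π * (k + 1)) ^ 2) / π ^ 2 := by
      field_simp; ring_nf; rw [Complex.I_sq]; ring
    rw [cotTerm_identity hz, hprod]
    push_cast
    field_simp
    ring_nf; rw [Complex.I_sq]; ring
  have hsum : x * Complex.I / π *
      (π * Complex.cot (π * (x * Complex.I / π)) - 1 / (x * Complex.I / π))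
        = ((x / tanh x - 1 : ℝ) : ℂ) := by
    have hsinh : Complex.sinh x ≠ 0 := by exact_mod_cast (sinh_eq_zero.not.mpr hx)
    rw [mul_div_cancel₀ _ hπ, Complex.cot_eq_cos_div_sin, Complex.cos_mul_I, Complex.sin_mul_I,
      tanh_eq_sinh_div_cosh]
    push_cast
    field_simp
  have h := (summable_cotTerm hz).hasSum.mul_left (x * Complex.I / π)
  rw [← cot_series_rep' hz] at h
  simp only [hterm, hsum] at h
  exact Complex.hasSum_ofReal.mp h

lemma hasSum_one_div_succ_sq : HasSum (fun k : ℕ => 1 / ((k : ℝ) + 1) ^ 2) (π ^ 2 / 6) := by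
  simpa using (hasSum_nat_add_iff' 1).mpr hasSum_zeta_two

lemma hasSum_two_div_pi_mul_succ_sq : HasSum (fun k : ℕ => 2 / (π * (k + 1)) ^ 2) (1 / 3) := by
  have h := hasSum_one_div_succ_sq.mul_left (2 / π ^ 2)
  rw [show 2 / π ^ 2 * (π ^ 2 / 6) = 1 / 3 by field_simp; ring] at h
  refine h.congr_fun fun k => ?_
  field_simp

lemma continuous_tsum_two_div_sq_add_sq :
    Continuous fun x : ℝ => ∑' k : ℕ, 2 / (x ^ 2 + (π * (k + 1)) ^ 2) := by
  refine continuous_tsum (fun k => ?_) hasSum_two_div_pi_mul_succ_sq.summable fun k x => ?_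
  · exact continuous_const.div (by fun_prop) fun x => by positivity
  · rw [norm_of_nonneg (by positivity)]
    gcongr
    exact le_add_of_nonneg_left (sq_nonneg x)

lemma tendsto_div_tanh_sub_one_div_sq :
    Tendsto (fun x : ℝ => (x / tanh x - 1) / x ^ 2) (𝓝[≠] 0) (𝓝 (1 / 3)) := by
  have h := (continuous_tsum_two_div_sq_add_sq.tendsto 0).mono_left
    (nhdsWithin_le_nhds (s := {0}ᶜ))
  simp only [ne_eq, OfNat.ofNat_ne_zero, not_false_eq_true, zero_pow, zero_add,
    hasSum_two_div_pi_mul_succ_sq.tsum_eq] at h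
  refine h.congr' (eventually_nhdsWithin_of_forall fun x (hx : x ≠ 0) => ?_)
  dsimp only
  rw [← ((hasSum_two_mul_sq_div_sq_add_sq_eq_div_tanh_sub_one hx).div_const (x ^ 2)).tsum_eq]
  refine tsum_congr fun k => ?_
  field_simp

lemma two_mul_tsum_one_div_one_add_sq {x : ℝ} (hx : x ≠ 0) :
    2 * ∑' k : ℕ, 1 / (1 + (π * (k + 1) / x) ^ 2) = x / tanh x - 1 := by
  rw [← tsum_mul_left]
  refine ((hasSum_two_mul_sq_div_sq_add_sq_eq_div_tanh_sub_one hx).congr_fun fun k => ?_).tsum_eq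
  field_simp

theorem stmt_9 (a b : ℝ) (hab : a < b) :
    (∀ n : ℕ, 1 ≤ n →
      2 * ∑' p : ℕ, 1 / (1 + (2 * (n : ℝ) * ((p : ℝ) + 1) * Real.pi / (b - a)) ^ 2)
        = ((b - a) / (2 * n)) / Real.tanh ((b - a) / (2 * n)) - 1) ∧
    Filter.Tendsto
      (fun n : ℕ => (n : ℝ) *
        Real.sqrt (2 * ∑' p : ℕ,
          1 / (1 + (2 * (n : ℝ) * ((p : ℝ) + 1) * Real.pi / (b - a)) ^ 2)))
      Filter.atTop (nhds ((b - a) / (2 * Real.sqrt 3))) := by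
  have hL : 0 < b - a := sub_pos.mpr hab
  have hscale (n p : ℕ) :
      2 * (n : ℝ) * (p + 1) * π / (b - a) = π * (p + 1) / ((b - a) / (2 * n)) := by
    rw [div_div_eq_mul_div]; ring
  have hclosed : ∀ n : ℕ, 1 ≤ n →
      2 * ∑' p : ℕ, 1 / (1 + (2 * (n : ℝ) * ((p : ℝ) + 1) * π / (b - a)) ^ 2)
        = ((b - a) / (2 * n)) / tanh ((b - a) / (2 * n)) - 1 := fun n hn => by
    have : (0 : ℝ) < n := by exact_mod_cast hn
    simp_rw [hscale]
    exact two_mul_tsum_one_div_one_add_sq (by positivity)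
  refine ⟨hclosed, ?_⟩
  have hx : Tendsto (fun n : ℕ => (b - a) / (2 * n)) atTop (𝓝[≠] 0) := by
    refine tendsto_nhdsWithin_of_tendsto_nhds_of_eventually_within _ ?_ ?_
    · simpa [div_div] using tendsto_const_div_atTop_nhds_zero_nat ((b - a) / 2)
    · filter_upwards [eventually_ge_atTop 1] with n hn
      have : (0 : ℝ) < n := by exact_mod_cast hn
      exact (by positivity : (b - a) / (2 * n) ≠ 0)
  have hlim := (tendsto_div_tanh_sub_one_div_sq.comp hx).sqrt.const_mul ((b - a) / 2)
  rw [show (b - a) / 2 * √(1 / 3) = (b - a) / (2 * √3) by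
    rw [one_div, sqrt_inv]; field_simp] at hlim
  refine hlim.congr' ?_
  filter_upwards [eventually_ge_atTop 1] with n hn
  have : (0 : ℝ) < n := by exact_mod_cast hn
  rw [Function.comp_apply, hclosed n hn, sqrt_div' _ (sq_nonneg _), sqrt_sq (by positivity)]
  field_simp
end

section
/- Let a < b and define K(x,y) = ((b−a)/sinh(b−a))·cosh(min(x,y) − a)·cosh(b − max(x,y)) for x, y in [a,b]. Then for every x in [a,b], (1/(b−a))∫_a^b K(x,y) dy = 1. -/
open Real intervalIntegral

lemma int_cosh_aux (t : ℝ) : ∫ x in (0:ℝ)..t, Real.cosh x = Real.sinh t := by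
  rw [intervalIntegral.integral_eq_sub_of_hasDerivAt
    (fun x _ => Real.hasDerivAt_sinh x)
    (Real.continuous_cosh.intervalIntegrable 0 t)]
  simp

theorem stmt_10 (a b : ℝ) (hab : a < b) :
    ∀ x ∈ Set.Icc a b,
      (1 / (b - a)) * ∫ y in a..b,
        ((b - a) / Real.sinh (b - a)) *
          Real.cosh (min x y - a) * Real.cosh (b - max x y) = 1 := by
  intro x hx
  obtain ⟨hax, hxb⟩ := hx
  have hsinh : Real.sinh (b - a) ≠ 0 := by
    apply ne_of_gt
    exact Real.sinh_pos_iff.mpr (by linarith)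
  have hba : b - a ≠ 0 := by linarith
  set c : ℝ := (b - a) / Real.sinh (b - a) with hc
  have key : (∫ y in a..b, c * Real.cosh (min x y - a) * Real.cosh (b - max x y))
      = c * Real.sinh (b - a) := by
    have hsplit : (∫ y in a..x, c * Real.cosh (min x y - a) * Real.cosh (b - max x y))
        + (∫ y in x..b, c * Real.cosh (min x y - a) * Real.cosh (b - max x y))
        = ∫ y in a..b, c * Real.cosh (min x y - a) * Real.cosh (b - max x y) := by
      apply intervalIntegral.integral_add_adjacent_intervals
      · apply ContinuousOn.intervalIntegrable
        fun_prop
      · apply ContinuousOn.intervalIntegrable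
        fun_prop
    have h1 : (∫ y in a..x, c * Real.cosh (min x y - a) * Real.cosh (b - max x y))
        = c * Real.cosh (b - x) * Real.sinh (x - a) := by
      have : (∫ y in a..x, c * Real.cosh (min x y - a) * Real.cosh (b - max x y))
          = ∫ y in a..x, (c * Real.cosh (b - x)) * Real.cosh (y - a) := by
        apply intervalIntegral.integral_congr
        intro y hy
        rw [Set.uIcc_of_le hax] at hy
        simp only [min_eq_right hy.2, max_eq_left hy.2]
        try ring
      rw [this, intervalIntegral.integral_const_mul]
      have : (∫ y in a..x, Real.cosh (y - a)) = Real.sinh (x - a) := by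
        rw [intervalIntegral.integral_comp_sub_right (fun t => Real.cosh t) a]
        simp [int_cosh_aux]
      rw [this]
    have h2 : (∫ y in x..b, c * Real.cosh (min x y - a) * Real.cosh (b - max x y))
        = c * Real.cosh (x - a) * Real.sinh (b - x) := by
      have : (∫ y in x..b, c * Real.cosh (min x y - a) * Real.cosh (b - max x y))
          = ∫ y in x..b, (c * Real.cosh (x - a)) * Real.cosh (b - y) := by
        apply intervalIntegral.integral_congr
        intro y hy
        rw [Set.uIcc_of_le hxb] at hy
        simp only [min_eq_left hy.1, max_eq_right hy.1]
        try ring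
      rw [this, intervalIntegral.integral_const_mul]
      have : (∫ y in x..b, Real.cosh (b - y)) = Real.sinh (b - x) := by
        rw [intervalIntegral.integral_comp_sub_left (fun t => Real.cosh t) b]
        simp [int_cosh_aux]
      rw [this]
    rw [← hsplit, h1, h2]
    have := Real.sinh_add (x - a) (b - x)
    have hxa : x - a + (b - x) = b - a := by ring
    rw [hxa] at this
    rw [this]
    ring
  rw [show (∫ y in a..b, c * Real.cosh (min x y - a) * Real.cosh (b - max x y))
      = c * Real.sinh (b - a) from key, hc]
  field_simp
end
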